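/- For the irreducible representation of SU(2) with highest weight m (dimension m+1), the average of π(g^n) over the Haar measure equals δ(n)·𝟙, where δ(n) = 1 if n = 0, δ(±1) = 0 (for m ≥ 1), δ(n) = 1/(m+1) if |n| ≥ 2 and m is even, δ(±2) = -1/(m+1) if m is odd, and δ(n) = 0 if |n| ≥ 3 and m is odd. -/

import Mathlib

open Real intervalIntegral

noncomputable def Kv (b : ℤ) : ℂ :=
  if b = 0 then (π : ℂ) else ((-1 : ℂ) ^ b - 1) / (Complex.I * b)

noncomputable def Jv (a : ℤ) : ℂ := (2 * Kv a - Kv (a + 2) - Kv (a - 2)) / 4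

lemma K_int (b : ℤ) :
    ∫ θ in (0:ℝ)..π, Complex.exp (Complex.I * b * θ) = Kv b := by
  rcases eq_or_ne b 0 with hb | hb
  · simp [hb, Kv]
  · have hc : Complex.I * (b : ℂ) ≠ 0 := by
      simp [Complex.I_ne_zero, hb]
    rw [integral_exp_mul_complex hc]
    have he : Complex.exp (Complex.I * b * π) = (-1 : ℂ) ^ b := by
      rw [show Complex.I * (b:ℂ) * (π:ℂ) = b * ((π:ℂ) * Complex.I) by ring,
        Complex.exp_int_mul, Complex.exp_pi_mul_I]
    simp [Kv, hb, he]

lemma exp_intble (c : ℂ) :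
    IntervalIntegrable (fun θ : ℝ => Complex.exp (c * θ)) MeasureTheory.volume 0 π := by
  apply Continuous.intervalIntegrable
  fun_prop

lemma J_int (a : ℤ) :
    ∫ θ in (0:ℝ)..π, Complex.exp (Complex.I * a * θ) * ((Real.sin θ : ℂ))^2 = Jv a := by
  have key : ∀ θ : ℝ, Complex.exp (Complex.I * a * θ) * ((Real.sin θ : ℂ))^2
      = (2 * Complex.exp ((Complex.I * a) * θ) - Complex.exp ((Complex.I * (a+2)) * θ)
          - Complex.exp ((Complex.I * (a-2)) * θ)) / 4 := by
    intro θ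
    have hsin : (Real.sin θ : ℂ)
        = (Complex.exp (θ * Complex.I) - Complex.exp (-θ * Complex.I)) * (-Complex.I) / 2 := by
      rw [Complex.ofReal_sin, Complex.sin]
      ring
    have h1 : Complex.exp ((Complex.I * ((a:ℂ)+2)) * θ)
        = Complex.exp (Complex.I * a * θ) * Complex.exp (θ * Complex.I)
            * Complex.exp (θ * Complex.I) := by
      rw [← Complex.exp_add, ← Complex.exp_add]; ring_nf
    have h2 : Complex.exp ((Complex.I * ((a:ℂ)-2)) * θ)
        = Complex.exp (Complex.I * a * θ) * Complex.exp (-θ * Complex.I)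
            * Complex.exp (-θ * Complex.I) := by
      rw [← Complex.exp_add, ← Complex.exp_add]; ring_nf
    have hPQ : Complex.exp (θ * Complex.I) * Complex.exp (-θ * Complex.I) = 1 := by
      rw [← Complex.exp_add]; ring_nf; exact Complex.exp_zero
    rw [hsin]
    rw [h1, h2]
    have hI : (Complex.I : ℂ)^2 = -1 := Complex.I_sq
    set X := Complex.exp (Complex.I * (a:ℂ) * θ)
    set P := Complex.exp (θ * Complex.I)
    set Q := Complex.exp (-θ * Complex.I)
    linear_combination (X*(P-Q)^2/4) * hI + (X/2) * hPQ
  rw [intervalIntegral.integral_congr (fun θ _ => key θ)]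
  rw [intervalIntegral.integral_div]
  rw [intervalIntegral.integral_sub (((exp_intble _).const_mul 2).sub (exp_intble _)) (exp_intble _),
      intervalIntegral.integral_sub ((exp_intble _).const_mul 2) (exp_intble _),
      intervalIntegral.integral_const_mul]
  have k1 := K_int a
  have k2 := K_int (a+2)
  have k3 := K_int (a-2)
  push_cast at k1 k2 k3 ⊢
  simp only [mul_assoc] at k1 k2 k3 ⊢
  rw [k1, k2, k3]
  rfl

lemma Kv_even {b : ℤ} (hb : Even b) (h0 : b ≠ 0) : Kv b = 0 := by
  rw [Kv, if_neg h0, hb.neg_one_zpow]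
  simp

lemma Kv_odd {b : ℤ} (hb : Odd b) : Kv b = -2 / (Complex.I * b) := by
  have h0 : b ≠ 0 := by obtain ⟨c,hc⟩ := hb; omega
  rw [Kv, if_neg h0, hb.neg_one_zpow]
  norm_num

lemma Kv_neg_odd {b : ℤ} (hb : Odd b) : Kv (-b) = -Kv b := by
  rw [Kv_odd hb.neg, Kv_odd hb]
  push_cast
  ring

lemma Kv_zero : Kv 0 = π := by simp [Kv]
lemma Kv_two : Kv 2 = 0 := Kv_even ⟨1, by ring⟩ (by decide)
lemma Kv_neg_two' : Kv (-2) = 0 := Kv_even ⟨-1, by ring⟩ (by decide)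
lemma Kv_four : Kv 4 = 0 := Kv_even ⟨2, by ring⟩ (by decide)
lemma Kv_neg_four : Kv (-4) = 0 := Kv_even ⟨-2, by ring⟩ (by decide)

lemma Jv_zero : Jv 0 = π / 2 := by
  rw [Jv, show (0+2:ℤ) = 2 by decide, show (0-2:ℤ) = -2 by decide,
    Kv_zero, Kv_two, Kv_neg_two']
  ring

lemma Jv_two : Jv 2 = -(π / 4) := by
  rw [Jv, show (2+2:ℤ) = 4 by decide, show (2-2:ℤ) = 0 by decide,
    Kv_zero, Kv_two, Kv_four]
  ring

lemma Jv_neg_two : Jv (-2) = -(π / 4) := by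
  rw [Jv, show (-2+2:ℤ) = 0 by decide, show (-2-2:ℤ) = -4 by decide,
    Kv_zero, Kv_neg_two', Kv_neg_four]
  ring

lemma Jv_even {a : ℤ} (ha : Even a) (h0 : a ≠ 0) (h2 : a ≠ 2) (h2' : a ≠ -2) : Jv a = 0 := by
  rw [Jv, Kv_even ha h0, Kv_even (by obtain ⟨c,hc⟩ := ha; exact ⟨c+1, by omega⟩) (by omega),
    Kv_even (by obtain ⟨c,hc⟩ := ha; exact ⟨c-1, by omega⟩) (by omega)]
  ring

lemma Jv_neg_odd {a : ℤ} (ha : Odd a) : Jv (-a) = -Jv a := by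
  have h1 : Odd (a + 2) := by obtain ⟨c,hc⟩ := ha; exact ⟨c+1, by omega⟩
  have h2 : Odd (a - 2) := by obtain ⟨c,hc⟩ := ha; exact ⟨c-1, by omega⟩
  rw [Jv, Jv, show (-a+2 : ℤ) = -(a-2) by ring, show (-a-2 : ℤ) = -(a+2) by ring,
    Kv_neg_odd ha, Kv_neg_odd h2, Kv_neg_odd h1]
  ring

lemma chi_int (m : ℕ) (n : ℤ) :
    (∫ θ in (0:ℝ)..π,
      (∑ k ∈ Finset.range (m+1), Complex.exp (Complex.I * ((m:ℂ) - 2*k) * (((n:ℝ)*θ : ℝ) : ℂ)))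
        * (((Real.sin θ)^2 : ℝ) : ℂ))
    = ∑ k ∈ Finset.range (m+1), Jv (((m:ℤ) - 2*k) * n) := by
  simp only [Finset.sum_mul]
  rw [intervalIntegral.integral_finset_sum]
  · refine Finset.sum_congr rfl fun k _ => ?_
    have : ∀ θ : ℝ, Complex.exp (Complex.I * ((m:ℂ) - 2*k) * (((n:ℝ)*θ : ℝ) : ℂ))
        * (((Real.sin θ)^2 : ℝ) : ℂ)
        = Complex.exp (Complex.I * ((((m:ℤ) - 2*k) * n : ℤ) : ℂ) * θ) * ((Real.sin θ : ℂ))^2 := by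
      intro θ
      have harg : Complex.I * ((m:ℂ) - 2*k) * (((n:ℝ)*θ : ℝ) : ℂ)
          = Complex.I * ((((m:ℤ) - 2*k) * n : ℤ) : ℂ) * θ := by
        push_cast
        ring
      rw [harg]
      push_cast
      ring
    rw [intervalIntegral.integral_congr (fun θ _ => this θ), J_int]
  · intro k _
    apply Continuous.intervalIntegrable
    fun_prop

lemma sum_zero (m : ℕ) :
    ∑ k ∈ Finset.range (m+1), Jv (((m:ℤ) - 2*k) * 0) = (m+1) * (π/2 : ℂ) := by
  simp only [mul_zero, Jv_zero, Finset.sum_const, Finset.card_range, nsmul_eq_mul]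
  push_cast
  ring

lemma sum_odd_odd (m : ℕ) (n : ℤ) (hm : Odd m) (hn : Odd n) :
    ∑ k ∈ Finset.range (m+1), Jv (((m:ℤ) - 2*k) * n) = 0 := by
  apply Finset.sum_involution (g := fun k _ => m - k)
  · intro k hk
    simp only [Finset.mem_range] at hk
    have hcast : ((m - k : ℕ) : ℤ) = (m : ℤ) - k := by omega
    have harg : ((m:ℤ) - 2*((m-k:ℕ):ℤ)) * n = -(((m:ℤ) - 2*k) * n) := by
      rw [hcast]; ring
    rw [harg, Jv_neg_odd]
    · ring
    · obtain ⟨c, hc⟩ := hm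
      refine (Int.odd_mul).2 ⟨⟨(c:ℤ) - k, by omega⟩, hn⟩
  · intro k hk _
    simp only [Finset.mem_range] at hk
    obtain ⟨c, hc⟩ := hm
    omega
  · intro k hk
    simp only [Finset.mem_range] at hk ⊢
    omega
  · intro k hk
    simp only [Finset.mem_range] at hk
    omega

lemma sum_even_big (m : ℕ) (n : ℤ) (hm : Even m) (hn : 2 ≤ |n|) :
    ∑ k ∈ Finset.range (m+1), Jv (((m:ℤ) - 2*k) * n) = (π/2 : ℂ) := by
  obtain ⟨t, ht⟩ := hm
  rw [Finset.sum_eq_single_of_mem t (Finset.mem_range.2 (by omega))]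
  · rw [show ((m:ℤ) - 2*t) * n = 0 by push_cast [ht]; ring, Jv_zero]
  · intro k hk hkt
    simp only [Finset.mem_range] at hk
    have h2 : 2 ≤ |(m:ℤ) - 2*k| := by
      rw [le_abs]
      omega
    obtain ⟨h0, ha, hb⟩ := prod_big h2 hn
    exact Jv_even ⟨((t:ℤ) - k)*n, by push_cast [ht]; ring⟩ h0 ha hb
where
  prod_big {a n : ℤ} (ha : 2 ≤ |a|) (hn : 2 ≤ |n|) :
      a * n ≠ 0 ∧ a * n ≠ 2 ∧ a * n ≠ -2 := by
    have h4 : 4 ≤ |a * n| := by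
      rw [abs_mul]
      nlinarith [abs_nonneg a, abs_nonneg n]
    refine ⟨?_, ?_, ?_⟩ <;> (intro h; rw [h] at h4; norm_num at h4)

lemma sum_even_pm1 (m : ℕ) (n : ℤ) (hm : Even m) (hm1 : 1 ≤ m) (hn : n = 1 ∨ n = -1) :
    ∑ k ∈ Finset.range (m+1), Jv (((m:ℤ) - 2*k) * n) = 0 := by
  obtain ⟨t, ht⟩ := hm
  have ht1 : 1 ≤ t := by omega
  have hsub : ({t-1, t, t+1} : Finset ℕ) ⊆ Finset.range (m+1) := by
    intro x hx
    simp only [Finset.mem_insert, Finset.mem_singleton] at hx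
    simp only [Finset.mem_range]
    omega
  rw [← Finset.sum_subset hsub]
  · have hd1 : (t-1 : ℕ) ≠ t := by omega
    have hd2 : (t-1 : ℕ) ≠ t+1 := by omega
    have hd3 : t ≠ t+1 := by omega
    rw [Finset.sum_insert (by simp [hd1, hd2]), Finset.sum_insert (by simp [hd3]),
      Finset.sum_singleton]
    have e1 : ((m:ℤ) - 2*((t-1:ℕ):ℤ)) = 2 := by omega
    have e2 : ((m:ℤ) - 2*(t:ℤ)) = 0 := by omega
    have e3 : ((m:ℤ) - 2*((t+1:ℕ):ℤ)) = -2 := by push_cast; omega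
    rcases hn with rfl | rfl <;>
      simp only [e1, e2, e3] <;> norm_num [Jv_zero, Jv_two, Jv_neg_two] <;> ring
  · intro k hk hknot
    simp only [Finset.mem_range] at hk
    simp only [Finset.mem_insert, Finset.mem_singleton, not_or] at hknot
    obtain ⟨h1, h2, h3⟩ := hknot
    have ha : Even (((m:ℤ) - 2*k) * n) := ⟨((t:ℤ)-k)*n, by push_cast [ht]; ring⟩
    apply Jv_even ha <;> rcases hn with rfl | rfl <;> omega

lemma sum_odd_pm2 (m : ℕ) (n : ℤ) (hm : Odd m) (hn : n = 2 ∨ n = -2) :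
    ∑ k ∈ Finset.range (m+1), Jv (((m:ℤ) - 2*k) * n) = -(π/2 : ℂ) := by
  obtain ⟨t, ht⟩ := hm
  have hsub : ({t, t+1} : Finset ℕ) ⊆ Finset.range (m+1) := by
    intro x hx
    simp only [Finset.mem_insert, Finset.mem_singleton] at hx
    simp only [Finset.mem_range]
    omega
  rw [← Finset.sum_subset hsub]
  · rw [Finset.sum_insert (by simp), Finset.sum_singleton]
    have e1 : ((m:ℤ) - 2*(t:ℤ)) = 1 := by omega
    have e2 : ((m:ℤ) - 2*((t+1:ℕ):ℤ)) = -1 := by push_cast; omega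
    rcases hn with rfl | rfl <;>
      simp only [e1, e2] <;> norm_num [Jv_two, Jv_neg_two] <;> ring
  · intro k hk hknot
    simp only [Finset.mem_range] at hk
    simp only [Finset.mem_insert, Finset.mem_singleton, not_or] at hknot
    obtain ⟨h1, h2⟩ := hknot
    have ha : Even (((m:ℤ) - 2*k) * n) := by
      rcases hn with rfl | rfl
      · exact ⟨(m:ℤ) - 2*k, by ring⟩
      · exact ⟨-((m:ℤ) - 2*k), by ring⟩
    apply Jv_even ha <;> rcases hn with rfl | rfl <;> omega

lemma sum_odd_even_big (m : ℕ) (n : ℤ) (hm : Odd m) (hne : Even n) (hn : 3 ≤ |n|) :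
    ∑ k ∈ Finset.range (m+1), Jv (((m:ℤ) - 2*k) * n) = 0 := by
  apply Finset.sum_eq_zero
  intro k hk
  simp only [Finset.mem_range] at hk
  obtain ⟨t, ht⟩ := hm
  have hm2k : ((m:ℤ) - 2*k) ≠ 0 := by omega
  have h1 : 1 ≤ |(m:ℤ) - 2*k| := Int.one_le_abs hm2k
  have hn4 : 4 ≤ |n| := by
    obtain ⟨d, hd⟩ := hne
    rcases abs_cases n with ⟨h, _⟩ | ⟨h, _⟩ <;> omega
  have hn0 : n ≠ 0 := by
    intro h
    rw [h] at hn4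
    norm_num at hn4
  have ha : Even (((m:ℤ) - 2*k) * n) := hne.mul_left _
  apply Jv_even ha
  · exact mul_ne_zero hm2k hn0
  all_goals
    intro h
    have h4 : 4 ≤ |((m:ℤ) - 2*k) * n| := by
      rw [abs_mul]
      nlinarith [abs_nonneg ((m:ℤ) - 2*k)]
    rw [h] at h4
    norm_num at h4

/-- For the irreducible representation of `SU(2)` with highest weight `m` (dimension `m+1`),
the Haar average of `π(g^n)` is `δ(n) 𝟙`, where, via the Weyl integration formula,
`δ(n) = (2/π) ∫₀^π χ_m(nθ) sin²θ dθ / (m+1)` with `χ_m(θ) = Σ_{k=0}^m e^{i(m-2k)θ}`.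
The values are: `δ(0) = 1`; `δ(±1) = 0` for `m ≥ 1`; `δ(n) = 1/(m+1)` for `|n| ≥ 2` and `m`
even; `δ(±2) = -1/(m+1)` for `m` odd; `δ(n) = 0` for `|n| ≥ 3` and `m` odd. -/
theorem su2_fs_indicator_values (m : ℕ) :
    let χ : ℝ → ℂ := fun θ =>
      ∑ k ∈ Finset.range (m + 1), Complex.exp (Complex.I * ((m : ℂ) - 2 * k) * θ)
    let δ : ℤ → ℂ := fun n =>
      (2 / (π : ℂ)) * (∫ θ in (0 : ℝ)..π, χ ((n : ℝ) * θ) * ((Real.sin θ) ^ 2 : ℝ)) / (m + 1)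
    δ 0 = 1 ∧
      (1 ≤ m → δ 1 = 0 ∧ δ (-1) = 0) ∧
      (∀ n : ℤ, 2 ≤ |n| → Even m → δ n = 1 / (m + 1)) ∧
      (Odd m → δ 2 = -1 / (m + 1) ∧ δ (-2) = -1 / (m + 1)) ∧
      (∀ n : ℤ, 3 ≤ |n| → Odd m → δ n = 0) := by
  intro χ δ
  have hπ : (π : ℂ) ≠ 0 := Complex.ofReal_ne_zero.2 Real.pi_ne_zero
  have hm1 : ((m:ℂ) + 1) ≠ 0 := by
    have := Nat.cast_add_one_ne_zero (R := ℂ) m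
    push_cast at this ⊢
    exact this
  have hδ : ∀ n : ℤ,
      δ n = 2 / (π:ℂ) * (∑ k ∈ Finset.range (m+1), Jv (((m:ℤ) - 2*k) * n)) / ((m:ℂ)+1) := by
    intro n
    simp only [δ, χ]
    rw [chi_int m n]
  refine ⟨?_, ?_, ?_, ?_, ?_⟩
  · rw [hδ 0, sum_zero]
    field_simp
  · intro h1m
    rcases Nat.even_or_odd m with he | ho
    · rw [hδ 1, hδ (-1), sum_even_pm1 m 1 he h1m (Or.inl rfl),
        sum_even_pm1 m (-1) he h1m (Or.inr rfl)]
      simp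
    · rw [hδ 1, hδ (-1), sum_odd_odd m 1 ho ⟨0, by ring⟩, sum_odd_odd m (-1) ho ⟨-1, by ring⟩]
      simp
  · intro n hn hme
    rw [hδ n, sum_even_big m n hme hn]
    field_simp
  · intro hmo
    rw [hδ 2, hδ (-2), sum_odd_pm2 m 2 hmo (Or.inl rfl), sum_odd_pm2 m (-2) hmo (Or.inr rfl)]
    have hv : 2 / (π:ℂ) * (-(π/2)) = -1 := by field_simp
    rw [hv]
    exact ⟨rfl, rfl⟩
  · intro n hn hmo
    rcases Int.even_or_odd n with he | ho
    · rw [hδ n, sum_odd_even_big m n hmo he hn]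
      simp
    · rw [hδ n, sum_odd_odd m n hmo ho]
      simp
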